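/- With S_n y = ∑_{j=0}^n ⟨y, e_j⟩ g_j, one has I - S_n* = P_n P_{n-1} ⋯ P_0 and I - S_n = P_0 P_1 ⋯ P_n, where P_k is the orthogonal projection onto the orthogonal complement of e_k. -/

import Mathlib

open scoped ComplexInnerProductSpace

/-- Orthogonal projection of `H` onto the orthogonal complement of `e k`. -/
noncomputable def projPerp {H : Type*} [NormedAddCommGroup H] [InnerProductSpace ℂ H]
    [CompleteSpace H] (e : ℕ → H) (k : ℕ) : H →L[ℂ] H :=
  (Submodule.span ℂ {e k})ᗮ.subtypeL.comp
    (Submodule.orthogonalProjection (Submodule.span ℂ {e k})ᗮ)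

/-- The product `P_n P_{n-1} ⋯ P_0`. -/
noncomputable def projProdDesc {H : Type*} [NormedAddCommGroup H] [InnerProductSpace ℂ H]
    [CompleteSpace H] (e : ℕ → H) : ℕ → H →L[ℂ] H
  | 0 => projPerp e 0
  | (n+1) => (projPerp e (n+1)).comp (projProdDesc e n)

/-- The product `P_0 P_1 ⋯ P_n`. -/
noncomputable def projProdAsc {H : Type*} [NormedAddCommGroup H] [InnerProductSpace ℂ H]
    [CompleteSpace H] (e : ℕ → H) : ℕ → H →L[ℂ] H
  | 0 => projPerp e 0
  | (n+1) => (projProdAsc e n).comp (projPerp e (n+1))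


/-
Write `S_n` through its recursion `S_{n+1} y = S_n y + ⟪e_{n+1}, y⟫ g_{n+1}`. The
Gram–Schmidt-type recursion for `g` says precisely `(I - S_n) e_{n+1} = g_{n+1}`, so
`(I - S_n) P_{n+1} y = (I - S_n) y - ⟪e_{n+1}, y⟫ g_{n+1} = (I - S_{n+1}) y`; by induction
`I - S_n = P_0 ⋯ P_n`. Each `P_k` is self-adjoint, so taking adjoints reverses the product.
-/

section

variable {H : Type*} [NormedAddCommGroup H] [InnerProductSpace ℂ H] [CompleteSpace H]

theorem projPerp_apply {e : ℕ → H} {k : ℕ} (he : ‖e k‖ = 1) (y : H) :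
    projPerp e k y = y - ⟪e k, y⟫ • e k := by
  change (Submodule.span ℂ {e k})ᗮ.starProjection y = _
  simp [Submodule.starProjection_orthogonal_val, Submodule.starProjection_singleton, he]

theorem isSelfAdjoint_projPerp (e : ℕ → H) (k : ℕ) : IsSelfAdjoint (projPerp e k) :=
  isSelfAdjoint_starProjection _

theorem adjoint_projProdAsc (e : ℕ → H) (n : ℕ) :
    ContinuousLinearMap.adjoint (projProdAsc e n) = projProdDesc e n := by
  induction n with
  | zero => exact isSelfAdjoint_projPerp e 0
  | succ n ih =>
    rw [projProdAsc, projProdDesc, ContinuousLinearMap.adjoint_comp, ih,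
      (isSelfAdjoint_projPerp e (n + 1)).adjoint_eq]

variable {e g : ℕ → H} {S : ℕ → H →L[ℂ] H}

theorem one_sub_zero_eq_projPerp (he : ‖e 0‖ = 1) (hg0 : g 0 = e 0)
    (hS : ∀ y, S 0 y = ∑ j ∈ Finset.range 1, ⟪e j, y⟫ • g j) :
    1 - S 0 = projPerp e 0 := by
  ext y
  simp [hS, hg0, projPerp_apply he]

theorem one_sub_succ_eq_comp_projPerp {n : ℕ} (he : ‖e (n + 1)‖ = 1)
    (hg : g (n + 1) = e (n + 1) - ∑ i ∈ Finset.range (n + 1), ⟪e i, e (n + 1)⟫ • g i)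
    (hS : ∀ m y, S m y = ∑ j ∈ Finset.range (m + 1), ⟪e j, y⟫ • g j) :
    1 - S (n + 1) = (1 - S n).comp (projPerp e (n + 1)) := by
  have hS_succ : ∀ y, S (n + 1) y = S n y + ⟪e (n + 1), y⟫ • g (n + 1) := fun y => by
    rw [hS, hS, Finset.sum_range_succ _ (n + 1)]
  have hg_eq : (1 - S n) (e (n + 1)) = g (n + 1) := by
    rw [hg, ← hS]
    rfl
  ext y
  rw [ContinuousLinearMap.comp_apply, projPerp_apply he, map_sub, map_smul, hg_eq]
  simp only [sub_apply, one_apply_eq_self, hS_succ]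
  abel

end

theorem kaczmarz_S_projection_products
    {H : Type*} [NormedAddCommGroup H] [InnerProductSpace ℂ H] [CompleteSpace H]
    (e g : ℕ → H) (he : ∀ n, ‖e n‖ = 1)
    (hg0 : g 0 = e 0)
    (hg : ∀ n, 0 < n → g n = e n - ∑ i ∈ Finset.range n, ⟪e i, e n⟫ • g i)
    (S : ℕ → H →L[ℂ] H)
    (hS : ∀ (n : ℕ) (y : H), S n y = ∑ j ∈ Finset.range (n + 1), ⟪e j, y⟫ • g j) :
    ∀ n : ℕ, 1 - ContinuousLinearMap.adjoint (S n) = projProdDesc e n ∧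
      1 - S n = projProdAsc e n := by
  have asc : ∀ n, 1 - S n = projProdAsc e n := by
    intro n
    induction n with
    | zero => exact one_sub_zero_eq_projPerp (he 0) hg0 (hS 0)
    | succ n ih =>
      rw [one_sub_succ_eq_comp_projPerp (he (n + 1)) (hg (n + 1) n.succ_pos) hS, ih, projProdAsc]
  intro n
  refine ⟨?_, asc n⟩
  rw [← adjoint_projProdAsc, ← asc n, map_sub, ContinuousLinearMap.one_def,
    ContinuousLinearMap.adjoint_id]
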